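/- For every positive integer k, the denominator of the Bernoulli number B_{2k} (written in lowest terms) equals the product of all primes p such that (p-1) divides 2k; in particular, the denominator of B_{2k} is squarefree. -/

import Mathlib

open Finset


lemma norm_le_one_iff {p : ℕ} [hp : Fact p.Prime] (r : ℚ) :
    padicNorm p r ≤ 1 ↔ ¬ p ∣ r.den := by
  rcases eq_or_ne r 0 with rfl | hr
  · simpa [padicNorm.zero] using hp.out.one_lt.ne'
  have hp1 : (1:ℚ) < p := by exact_mod_cast hp.out.one_lt
  rw [padicNorm.eq_zpow_of_nonzero hr]
  have hval : padicValRat p r = (padicValInt p r.num : ℤ) - padicValNat p r.den := rfl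
  constructor
  · intro h hdvd
    have hnum : ¬ (p:ℤ) ∣ r.num := by
      intro hd
      have hg : p ∣ Nat.gcd r.num.natAbs r.den :=
        Nat.dvd_gcd (Int.natCast_dvd_natCast.mp (by rwa [Int.dvd_natAbs])) hdvd
      rw [r.reduced] at hg
      exact hp.out.one_lt.ne' (Nat.dvd_one.mp hg)
    have h1 : padicValInt p r.num = 0 := padicValInt.eq_zero_of_not_dvd hnum
    have h2 : 1 ≤ padicValNat p r.den := one_le_padicValNat_of_dvd r.pos.ne' hdvd
    have hlt : (1:ℚ) < (p:ℚ) ^ (-padicValRat p r) :=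
      one_lt_zpow₀ hp1 (by rw [hval]; omega)
    linarith
  · intro h
    have h2 : padicValNat p r.den = 0 := padicValNat.eq_zero_of_not_dvd h
    exact zpow_le_one_of_nonpos₀ (le_of_lt hp1) (by rw [hval]; omega)

lemma den_eq_one_of_norms {r : ℚ} (h : ∀ p : ℕ, p.Prime → padicNorm p r ≤ 1) :
    r.den = 1 := by
  by_contra hd
  obtain ⟨p, hp, hdvd⟩ := Nat.exists_prime_and_dvd hd
  haveI : Fact p.Prime := ⟨hp⟩
  exact (norm_le_one_iff r).mp (h p hp) hdvd


lemma faulhaber_rearranged (n N : ℕ) (hn : 0 < n) :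
    (N : ℚ) * bernoulli n =
      (∑ i ∈ range N, (i : ℚ) ^ n)
        - ∑ j ∈ range n, bernoulli j * ((n + 1).choose j) * (N : ℚ) ^ (n + 1 - j) / (n + 1) := by
  have h := sum_range_pow N n
  rw [Finset.sum_range_succ] at h
  have hterm : bernoulli n * ((n + 1).choose n) * (N : ℚ) ^ (n + 1 - n) / (n + 1)
      = (N:ℚ) * bernoulli n := by
    rw [Nat.choose_succ_self_right]
    have : n + 1 - n = 1 := by omega
    rw [this]
    have hne : ((n:ℚ) + 1) ≠ 0 := by positivity
    field_simp
    push_cast; ring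
  rw [hterm] at h
  linarith


lemma val_le_sub_two {p m : ℕ} (hp : p.Prime) (hm : 2 ≤ m) (h : ¬(p = 2 ∧ m = 2)) :
    padicValNat p m + 2 ≤ m := by
  set v := padicValNat p m with hv
  have hdvd : p ^ v ∣ m := pow_padicValNat_dvd
  have hle : p ^ v ≤ m := Nat.le_of_dvd (by omega) hdvd
  have h2 : 2 ^ v ≤ p ^ v := Nat.pow_le_pow_left hp.two_le v
  rcases Nat.lt_or_ge v 1 with hv0 | hv1
  · omega
  rcases Nat.lt_or_ge v 2 with hv1' | hv2
  · -- v = 1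
    have hv1'' : v = 1 := by omega
    rw [hv1'', pow_one] at hle
    rcases Nat.lt_or_ge p 3 with hp2 | hp3
    · -- p = 2
      have hp2' : p = 2 := by have := hp.two_le; omega
      have hm2 : m ≠ 2 := fun hm2 => h ⟨hp2', hm2⟩
      have : 2 ∣ m := by rw [← hp2']; simpa [hv1''] using hdvd
      omega
    · omega
  · -- v ≥ 2 : 2^v ≥ 2*v ≥ v + 2
    have : 2 * v ≤ 2 ^ v := by
      calc 2 * v ≤ 2 * 2 ^ (v - 1) := by
            have := Nat.lt_two_pow_self (n := v - 1)
            omega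
        _ = 2 ^ v := by rw [← pow_succ']; congr 1; omega
    omega

lemma norm_pow_div_le {p m : ℕ} [hp : Fact p.Prime] (hm : 2 ≤ m) (h : ¬(p = 2 ∧ m = 2)) :
    padicNorm p ((p : ℚ) ^ m / m) ≤ ((p : ℚ))⁻¹ ^ 2 := by
  have hp1 : 1 < p := hp.out.one_lt
  have hpq : (1:ℚ) < p := by exact_mod_cast hp1
  have hne : ((p:ℚ) ^ m / m) ≠ 0 := by positivity
  have hval : padicValRat p ((p : ℚ) ^ m / m) = m - padicValNat p m := by
    rw [padicValRat.div (by positivity) (by positivity : ((m:ℚ)) ≠ 0),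
      padicValRat.pow ((p:ℚ)), padicValRat.self hp1,
      padicValRat.of_nat]
    ring
  rw [padicNorm.eq_zpow_of_nonzero hne, hval]
  have h2 : ((p:ℚ))⁻¹ ^ 2 = (p:ℚ) ^ (-2 : ℤ) := by
    rw [zpow_neg, ← zpow_natCast]; norm_num
  rw [h2]
  apply zpow_le_zpow_right₀ (le_of_lt hpq)
  have hkey := val_le_sub_two hp.out hm h
  omega


lemma sum_range_cast_pow (p n : ℕ) [NeZero p] :
    (∑ i ∈ range p, (i : ZMod p) ^ n) = ∑ x : ZMod p, x ^ n := by
  refine Finset.sum_nbij' (fun i => (i : ZMod p)) (fun x => x.val) ?_ ?_ ?_ ?_ ?_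
  · intros; exact mem_univ _
  · intro x _; simpa using ZMod.val_lt x
  · intro i hi; exact ZMod.val_natCast_of_lt (mem_range.mp hi)
  · intro x _; exact ZMod.natCast_rightInverse x
  · intros; rfl

lemma zmod_sum_pow (p n : ℕ) [hp : Fact p.Prime] (hn : 0 < n) :
    (∑ i ∈ range p, (i : ZMod p) ^ n) = if (p - 1) ∣ n then -1 else 0 := by
  classical
  rw [sum_range_cast_pow]
  have h2 : (∑ x : ZMod p, x ^ n) = ∑ x : (ZMod p)ˣ, (x : ZMod p) ^ n := by
    let φ : (ZMod p)ˣ ↪ ZMod p := ⟨fun x => x, Units.val_injective⟩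
    have hm : univ.map φ = univ \ {0} := by
      ext x
      simpa only [mem_map, mem_univ, Function.Embedding.coeFn_mk, true_and, mem_sdiff,
        mem_singleton, φ, IsUnit, ne_eq] using isUnit_iff_ne_zero
    calc
      ∑ x : ZMod p, x ^ n = ∑ x ∈ univ \ {(0 : ZMod p)}, x ^ n := by
        rw [← sum_sdiff ({0} : Finset (ZMod p)).subset_univ, sum_singleton, zero_pow hn.ne',
          add_zero]
      _ = ∑ x : (ZMod p)ˣ, (x : ZMod p) ^ n := by simp [φ, ← hm, univ.sum_map φ]
  rw [h2]
  have := FiniteField.sum_pow_units (ZMod p) n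
  rwa [ZMod.card] at this

lemma sum_pow_cong (p n : ℕ) [hp : Fact p.Prime] (hn : 0 < n) :
    padicNorm p ((∑ i ∈ range p, (i : ℚ) ^ n) + (if (p - 1) ∣ n then 1 else 0)) < 1 := by
  classical
  set z : ℤ := (∑ i ∈ range p, (i : ℤ) ^ n) + (if (p - 1) ∣ n then 1 else 0) with hz
  have hcast : ((∑ i ∈ range p, (i : ℚ) ^ n) + (if (p - 1) ∣ n then 1 else 0)) = (z : ℚ) := by
    rw [hz]; push_cast; split <;> push_cast <;> ring
  rw [hcast, padicNorm.int_lt_one_iff]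
  have : ((z : ℤ) : ZMod p) = 0 := by
    rw [hz]
    push_cast
    rw [sum_range_cast_pow, ← sum_range_cast_pow p n, zmod_sum_pow p n hn]
    split <;> ring
  exact_mod_cast (ZMod.intCast_zmod_eq_zero_iff_dvd z p).mp this


lemma bernoulli_odd_zero {n : ℕ} (h : Odd n) (h1 : 1 < n) : bernoulli n = 0 := by
  rw [bernoulli_eq_bernoulli'_of_ne_one (by omega), bernoulli'_eq_zero_of_odd h h1]

lemma term_norm_lt (n j : ℕ) (hn : 2 ≤ n) (hev : Even n) (hj : j < n)
    (IH : ∀ i, i < n → ∀ (q : ℕ), Fact q.Prime → padicNorm q (bernoulli i) ≤ q)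
    (p : ℕ) [hp : Fact p.Prime] :
    padicNorm p (bernoulli j * ((n + 1).choose j : ℚ) * (p : ℚ) ^ (n + 1 - j) / (n + 1)) < 1 := by
  by_cases hbad : p = 2 ∧ n + 1 - j = 2
  · obtain ⟨hp2, hm2'⟩ := hbad
    have hjj : j = n - 1 := by omega
    rcases eq_or_lt_of_le hn with h2 | h4
    · -- n = 2, j = 1
      have hn2 : n = 2 := h2.symm
      have hj1 : j = 1 := by omega
      subst hn2 hj1 hp2
      have harg : bernoulli 1 * (((2 + 1).choose 1 : ℕ) : ℚ) * ((2:ℕ) : ℚ) ^ (2 + 1 - 1)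
          / (((2:ℕ) : ℚ) + 1) = ((-2 : ℤ) : ℚ) := by
        rw [bernoulli_one]; norm_num
      rw [harg, padicNorm.int_lt_one_iff]
      decide
    · -- n ≥ 4 even, j = n-1 odd ≥ 3
      obtain ⟨t, ht⟩ := hev
      have hodd : Odd j := ⟨t - 1, by omega⟩
      have hj3 : 1 < j := by omega
      rw [bernoulli_odd_zero hodd hj3]
      simpa using one_pos
  · -- generic case
    set m := n + 1 - j with hm
    have hm2 : 2 ≤ m := by omega
    have hq : ((n + 1).choose j : ℚ) / (n + 1) = (n.choose j : ℚ) / m := by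
      have h1 := Nat.choose_succ_right_eq (n + 1) j
      have h2 := Nat.add_one_mul_choose_eq n j
      have hnat : (n + 1).choose j * m = n.choose j * (n + 1) := by
        rw [hm, ← h1, ← h2]
        exact Nat.mul_comm _ _
      rw [div_eq_div_iff (by positivity) (by positivity : (m:ℚ) ≠ 0)]
      exact_mod_cast hnat
    have heq : bernoulli j * ((n + 1).choose j : ℚ) * (p : ℚ) ^ m / (n + 1)
        = bernoulli j * (n.choose j : ℚ) * ((p : ℚ) ^ m / m) := by
      linear_combination (bernoulli j * (p:ℚ) ^ m) * hq
    rw [heq, padicNorm.mul, padicNorm.mul]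
    have hB := IH j hj p hp
    have hC : padicNorm p ((n.choose j : ℚ)) ≤ 1 := padicNorm.of_nat _
    have hX := norm_pow_div_le hm2 hbad
    have hpq : (1:ℚ) < p := by exact_mod_cast hp.out.one_lt
    have n2 := padicNorm.nonneg (p := p) ((n.choose j : ℚ))
    have n3 := padicNorm.nonneg (p := p) ((p : ℚ) ^ m / m)
    calc padicNorm p (bernoulli j) * padicNorm p ((n.choose j : ℚ)) * padicNorm p ((p : ℚ) ^ m / m)
        ≤ (p : ℚ) * 1 * ((p:ℚ))⁻¹ ^ 2 := by
          apply mul_le_mul (mul_le_mul hB hC n2 (by linarith)) hX n3 (by positivity)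
      _ = ((p:ℚ))⁻¹ := by field_simp [sq]
      _ < 1 := by rw [inv_lt_one_iff₀]; right; exact hpq


lemma key_step (n : ℕ) (hn : 2 ≤ n) (hev : Even n)
    (IH : ∀ i, i < n → ∀ (q : ℕ), Fact q.Prime → padicNorm q (bernoulli i) ≤ q)
    (p : ℕ) [hp : Fact p.Prime] :
    padicNorm p ((p : ℚ) * bernoulli n - ∑ i ∈ range p, (i : ℚ) ^ n) < 1 := by
  have h := faulhaber_rearranged n p (by omega)
  have heq : (p : ℚ) * bernoulli n - ∑ i ∈ range p, (i : ℚ) ^ n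
      = -∑ j ∈ range n, bernoulli j * ((n + 1).choose j) * (p : ℚ) ^ (n + 1 - j) / (n + 1) := by
    linarith
  rw [heq, padicNorm.neg]
  exact padicNorm.sum_lt' (fun j hjr => term_norm_lt n j hn hev (mem_range.mp hjr) IH p) one_pos

lemma sum_pow_norm_le (N n : ℕ) (p : ℕ) [hp : Fact p.Prime] :
    padicNorm p (∑ i ∈ range N, (i : ℚ) ^ n) ≤ 1 := by
  apply padicNorm.sum_le' _ zero_le_one
  intro i _
  rw [show ((i:ℚ))^n = ((i ^ n : ℕ) : ℚ) by push_cast; ring]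
  exact padicNorm.of_nat _

lemma bernoulli_norm_le (n : ℕ) : ∀ (p : ℕ), Fact p.Prime → padicNorm p (bernoulli n) ≤ p := by
  induction n using Nat.strong_induction_on with
  | _ n IH =>
    intro p hp
    have hpq : (1:ℚ) < p := by exact_mod_cast hp.out.one_lt
    rcases Nat.lt_or_ge n 2 with hn2 | hn2
    · interval_cases n
      · rw [bernoulli_zero, padicNorm.one]; linarith
      · rw [bernoulli_one]
        have h1 : (-1/2 : ℚ) = -((1:ℚ) / ((2:ℕ):ℚ)) := by norm_num
        rw [h1, padicNorm.neg, padicNorm.div]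
        rcases eq_or_ne p 2 with rfl | hne
        · rw [padicNorm.padicNorm_p_of_prime, padicNorm.one]
          norm_num
        · rw [(padicNorm.nat_eq_one_iff _).mpr (by
            intro h; exact hne ((Nat.prime_dvd_prime_iff_eq hp.out Nat.prime_two).mp h)),
            padicNorm.one]
          norm_num; exact hp.out.one_lt.le
    · rcases Nat.even_or_odd n with hev | hodd
      · have hks := key_step n hn2 hev (fun i hi q hq => IH i hi q hq) p
        have hS := sum_pow_norm_le p n p
        have hsum : padicNorm p ((p:ℚ) * bernoulli n) ≤ 1 := by
          have : (p:ℚ) * bernoulli n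
              = ((p:ℚ) * bernoulli n - ∑ i ∈ range p, (i : ℚ) ^ n)
                + ∑ i ∈ range p, (i : ℚ) ^ n := by ring
          rw [this]
          exact le_trans padicNorm.nonarchimedean (max_le (le_of_lt hks) hS)
        rw [padicNorm.mul, padicNorm.padicNorm_p_of_prime] at hsum
        calc padicNorm p (bernoulli n)
            = (p:ℚ) * ((p:ℚ)⁻¹ * padicNorm p (bernoulli n)) := by
              field_simp
          _ ≤ (p:ℚ) * 1 := by
              apply mul_le_mul_of_nonneg_left hsum (by linarith)
          _ = p := mul_one _
      · rw [bernoulli_odd_zero hodd (by omega), padicNorm.zero]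
        linarith


-- discreteness helper
lemma norm_le_one_of_lt_p {p : ℕ} [hp : Fact p.Prime] {x : ℚ}
    (h : padicNorm p x < p) : padicNorm p x ≤ 1 := by
  rcases eq_or_ne x 0 with rfl | hx
  · rw [padicNorm.zero]; exact zero_le_one
  have hpq : (1:ℚ) < p := by exact_mod_cast hp.out.one_lt
  rw [padicNorm.eq_zpow_of_nonzero hx] at *
  have h1 : (p:ℚ) ^ (-padicValRat p x) < (p:ℚ) ^ (1:ℤ) := by rwa [zpow_one]
  have h2 : -padicValRat p x < 1 := (zpow_lt_zpow_iff_right₀ hpq).mp h1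
  calc (p:ℚ) ^ (-padicValRat p x) ≤ (p:ℚ) ^ (0:ℤ) :=
        zpow_le_zpow_right₀ hpq.le (by omega)
    _ = 1 := zpow_zero _

lemma key_cong (n : ℕ) (hn : 2 ≤ n) (hev : Even n) (p : ℕ) [hp : Fact p.Prime] :
    padicNorm p ((p : ℚ) * bernoulli n + (if (p - 1) ∣ n then 1 else 0)) < 1 := by
  have h1 := key_step n hn hev (fun i _ q hq => bernoulli_norm_le i q hq) p
  have h2 := sum_pow_cong p n (by omega)
  have heq : (p : ℚ) * bernoulli n + (if (p - 1) ∣ n then 1 else 0)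
      = ((p : ℚ) * bernoulli n - ∑ i ∈ range p, (i : ℚ) ^ n)
        + ((∑ i ∈ range p, (i : ℚ) ^ n) + (if (p - 1) ∣ n then 1 else 0)) := by ring
  rw [heq]
  exact lt_of_le_of_lt padicNorm.nonarchimedean (max_lt h1 h2)

lemma norm_p_inv {p q : ℕ} [hp : Fact p.Prime] (hq : q.Prime) (hne : p ≠ q) :
    padicNorm p (((q:ℚ))⁻¹) = 1 := by
  rw [← one_div, padicNorm.div, padicNorm.one,
    (padicNorm.nat_eq_one_iff _).mpr (fun h => hne ((Nat.prime_dvd_prime_iff_eq hp.out hq).mp h))]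
  norm_num

lemma bernoulli_add_inv_norm_le (n : ℕ) (hn : 2 ≤ n) (hev : Even n) (p : ℕ) [hp : Fact p.Prime]
    (hdvd : (p - 1) ∣ n) :
    padicNorm p (bernoulli n + ((p:ℚ))⁻¹) ≤ 1 := by
  have h := key_cong n hn hev p
  rw [if_pos hdvd] at h
  have hp0 : ((p:ℚ)) ≠ 0 := by exact_mod_cast hp.out.pos.ne'
  have heq : (p : ℚ) * bernoulli n + 1 = (p:ℚ) * (bernoulli n + ((p:ℚ))⁻¹) := by
    field_simp
  rw [heq, padicNorm.mul, padicNorm.padicNorm_p_of_prime] at h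
  have hpq : (1:ℚ) < p := by exact_mod_cast hp.out.one_lt
  apply norm_le_one_of_lt_p
  calc padicNorm p (bernoulli n + ((p:ℚ))⁻¹)
      = (p:ℚ) * ((p:ℚ)⁻¹ * padicNorm p (bernoulli n + ((p:ℚ))⁻¹)) := by
        rw [← mul_assoc, mul_inv_cancel₀ hp0, one_mul]
    _ < (p:ℚ) * 1 := by apply mul_lt_mul_of_pos_left h (by linarith)
    _ = p := mul_one _

lemma bernoulli_norm_le_one (n : ℕ) (hn : 2 ≤ n) (hev : Even n) (p : ℕ) [hp : Fact p.Prime]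
    (hdvd : ¬ (p - 1) ∣ n) :
    padicNorm p (bernoulli n) ≤ 1 := by
  have h := key_cong n hn hev p
  rw [if_neg hdvd, add_zero, padicNorm.mul, padicNorm.padicNorm_p_of_prime] at h
  have hpq : (1:ℚ) < p := by exact_mod_cast hp.out.one_lt
  apply norm_le_one_of_lt_p
  calc padicNorm p (bernoulli n)
      = (p:ℚ) * ((p:ℚ)⁻¹ * padicNorm p (bernoulli n)) := by
        rw [← mul_assoc, mul_inv_cancel₀ (by exact_mod_cast hp.out.pos.ne' : ((p:ℚ)) ≠ 0), one_mul]
    _ < (p:ℚ) * 1 := by apply mul_lt_mul_of_pos_left h (by linarith)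
    _ = p := mul_one _

lemma bernoulli_norm_eq (n : ℕ) (hn : 2 ≤ n) (hev : Even n) (p : ℕ) [hp : Fact p.Prime]
    (hdvd : (p - 1) ∣ n) :
    padicNorm p (bernoulli n) = p := by
  have h1 := bernoulli_add_inv_norm_le n hn hev p hdvd
  have hpq : (1:ℚ) < p := by exact_mod_cast hp.out.one_lt
  have hinv : padicNorm p (-((p:ℚ))⁻¹) = p := by
    rw [padicNorm.neg, ← one_div, padicNorm.div, padicNorm.one,
      padicNorm.padicNorm_p_of_prime, one_div, inv_inv]
  have heq : bernoulli n = (bernoulli n + ((p:ℚ))⁻¹) + (-((p:ℚ))⁻¹) := by ring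
  rw [heq, padicNorm.add_eq_max_of_ne (by rw [hinv]; intro h; rw [h] at h1; linarith), hinv]
  exact max_eq_right (by linarith)


lemma squarefree_prod_primes {s : Finset ℕ} (h : ∀ p ∈ s, p.Prime) :
    Squarefree (∏ p ∈ s, p) := by
  classical
  induction s using Finset.induction_on with
  | empty => simpa using squarefree_one
  | @insert a s hna ih =>
    rw [Finset.prod_insert hna]
    have hap : a.Prime := h a (mem_insert_self a s)
    have hcop : a.Coprime (∏ p ∈ s, p) :=
      Nat.Coprime.prod_right fun i hi =>
        (Nat.coprime_primes hap (h i (mem_insert_of_mem hi))).mpr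
          (fun he => hna (he ▸ hi))
    exact (Nat.squarefree_mul hcop).mpr
      ⟨hap.squarefree, ih (fun p hp => h p (mem_insert_of_mem hp))⟩

theorem von_staudt_clausen (n : ℕ) (hn : 2 ≤ n) (hev : Even n) :
    (bernoulli n).den
      = ∏ p ∈ Finset.filter (fun p => Nat.Prime p ∧ (p - 1) ∣ n) (Finset.range (n + 2)), p := by
  classical
  set P := Finset.filter (fun p => Nat.Prime p ∧ (p - 1) ∣ n) (Finset.range (n + 2)) with hP
  have hmemP : ∀ q : ℕ, q.Prime → (q ∈ P ↔ (q - 1) ∣ n) := by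
    intro q hq
    rw [hP, mem_filter, mem_range]
    constructor
    · exact fun h => h.2.2
    · intro h
      refine ⟨?_, hq, h⟩
      have h1 : q - 1 ≤ n := Nat.le_of_dvd (by omega) h
      omega
  have hPprime : ∀ p ∈ P, p.Prime := fun p hp => (mem_filter.mp hp).2.1
  set s : ℚ := ∑ p ∈ P, ((p:ℚ))⁻¹ with hs
  -- r is an integer
  have hint : (bernoulli n + s).den = 1 := by
    apply den_eq_one_of_norms
    intro q hq
    haveI : Fact q.Prime := ⟨hq⟩
    by_cases hqP : q ∈ P
    · have hsplit : bernoulli n + s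
          = (bernoulli n + ((q:ℚ))⁻¹) + ∑ p ∈ P.erase q, ((p:ℚ))⁻¹ := by
        rw [hs, ← Finset.add_sum_erase _ _ hqP]; ring
      rw [hsplit]
      refine le_trans padicNorm.nonarchimedean (max_le ?_ ?_)
      · exact bernoulli_add_inv_norm_le n hn hev q ((hmemP q hq).mp hqP)
      · apply padicNorm.sum_le' _ zero_le_one
        intro p hp
        exact le_of_eq (norm_p_inv (hPprime p (mem_of_mem_erase hp))
          (fun he => (mem_erase.mp hp).1 he.symm))
    · have hnd : ¬ (q - 1) ∣ n := fun h => hqP ((hmemP q hq).mpr h)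
      refine le_trans padicNorm.nonarchimedean (max_le ?_ ?_)
      · exact bernoulli_norm_le_one n hn hev q hnd
      · apply padicNorm.sum_le' _ zero_le_one
        intro p hp
        exact le_of_eq (norm_p_inv (hPprime p hp) (fun he => hqP (he ▸ hp)))
  set D : ℕ := ∏ p ∈ P, p with hD
  have hDpos : 0 < D := Finset.prod_pos fun p hp => (hPprime p hp).pos
  -- den ∣ D
  have hdvd1 : (bernoulli n).den ∣ D := by
    set z : ℤ := (bernoulli n + s).num * D - ∑ p ∈ P, (D / p : ℕ) with hz
    have hB : bernoulli n = (z : ℚ) / (D : ℚ) := by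
      have hDne : ((D:ℚ)) ≠ 0 := by exact_mod_cast hDpos.ne'
      rw [eq_div_iff hDne, hz, Int.cast_sub, Int.cast_mul, Int.cast_natCast, Int.cast_natCast,
        Nat.cast_sum]
      have hnum : ((bernoulli n + s).num : ℚ) = bernoulli n + s := by
        conv_rhs => rw [← Rat.num_div_den (bernoulli n + s), hint]
        norm_num
      rw [hnum]
      have hsummul : s * (D:ℚ) = ∑ p ∈ P, ((D / p : ℕ) : ℚ) := by
        rw [hs, Finset.sum_mul]
        apply Finset.sum_congr rfl
        intro p hp
        rw [Nat.cast_div (Finset.dvd_prod_of_mem _ hp)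
          (by exact_mod_cast (hPprime p hp).pos.ne' : ((p:ℚ)) ≠ 0)]
        ring
      linear_combination -hsummul
    have : bernoulli n = Rat.divInt z D := by rw [Rat.divInt_eq_div, hB]; norm_num
    rw [this]
    exact_mod_cast Rat.den_dvd z D
  -- D ∣ den
  have hdvd2 : D ∣ (bernoulli n).den := by
    rw [hD]
    apply prod_primes_dvd
    · exact fun p hp => (hPprime p hp).prime
    · intro p hp
      haveI : Fact p.Prime := ⟨hPprime p hp⟩
      have h1 : padicNorm p (bernoulli n) = p :=
        bernoulli_norm_eq n hn hev p ((hmemP p (hPprime p hp)).mp hp)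
      by_contra hnd
      have := (norm_le_one_iff (bernoulli n)).mpr hnd
      rw [h1] at this
      have : (1:ℚ) < p := by exact_mod_cast (hPprime p hp).one_lt
      linarith
  exact Nat.dvd_antisymm hdvd1 hdvd2

/-- For every positive integer `k`, the denominator of the Bernoulli number `B (2k)` (in lowest
terms) equals the product of all primes `p` with `(p - 1) ∣ 2k`; in particular, this denominator
is squarefree. (Every prime `p` with `(p - 1) ∣ 2k` satisfies `p ≤ 2k + 1`, so the product below
ranges over all such primes.) -/
theorem bernoulli_den_eq_prod_primes (k : ℕ) (hk : 0 < k) :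
    ((bernoulli (2 * k)).den =
      ∏ p ∈ Finset.filter (fun p => Nat.Prime p ∧ (p - 1) ∣ 2 * k)
        (Finset.range (2 * k + 2)), p) ∧
    Squarefree (bernoulli (2 * k)).den := by
  have hd := von_staudt_clausen (2 * k) (by omega) (even_two_mul k)
  refine ⟨hd, ?_⟩
  rw [hd]
  exact squarefree_prod_primes (fun p hp => (Finset.mem_filter.mp hp).2.1)
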